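/- Let Γ be a discrete subring of ℂ containing 1, let z ∈ ℂ' and let (a_n)_{n≥0} be a continued fraction expansion of z over Γ with iteration sequence (z_n), Q-pair (p_n), (q_n), and relative errors δ_n = q_n(q_n·z − p_n). Then for any n ≥ 1 with |q_{n−1}| ≤ |q_n| the following hold: (i) if |z_{n+1}| > 1 then |δ_n| ≤ (|z_{n+1}| − 1)^{−1}; (ii) |δ_{n−1}| ≤ |δ_n| + 1. -/

import Mathlib

/-- The quotient field of a subring `Γ` of `ℂ`, as a subset of `ℂ`. -/
def quotField (Γ : Subring ℂ) : Set ℂ :=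
  {x | ∃ p ∈ Γ, ∃ q ∈ Γ, q ≠ 0 ∧ x = p / q}

/-- `(a n)` is a continued fraction expansion of `z` over `Γ`, with iteration
sequence `(zs n)`: `zs 0 = z`, `0 < |zs n - a n| < 1` and `zs (n+1) = (zs n - a n)⁻¹`. -/
def IsCFE (Γ : Subring ℂ) (z : ℂ) (a zs : ℕ → ℂ) : Prop :=
  (∀ n, a n ∈ Γ) ∧ zs 0 = z ∧
    (∀ n, 0 < norm (zs n - a n) ∧ norm (zs n - a n) < 1) ∧
    (∀ n, zs (n + 1) = (zs n - a n)⁻¹)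

/-- The Q-pair of a sequence of partial quotients, with indices shifted by one:
`p (n+1)` is the paper's `p_n` and `q (n+1)` is the paper's `q_n`
(so `p 0 = p_{-1} = 1` and `q 0 = q_{-1} = 0`). -/
def IsQPair (a p q : ℕ → ℂ) : Prop :=
  p 0 = 1 ∧ p 1 = a 0 ∧ (∀ n, p (n + 2) = a (n + 1) * p (n + 1) + p n) ∧
  q 0 = 0 ∧ q 1 = 1 ∧ (∀ n, q (n + 2) = a (n + 1) * q (n + 1) + q n)


/-- The sequence of relative errors `δ_n = q_n (q_n z - p_n)` (index shifted by one
in `p`, `q`, so `relErr z p q n` is the paper's `δ_n`). -/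
def relErr (z : ℂ) (p q : ℕ → ℂ) (n : ℕ) : ℂ :=
  q (n + 1) * (q (n + 1) * z - p (n + 1))

/-! The denominator `D_n = z_{n+1} q_n + q_{n-1}` of `z = (z_{n+1} p_n + p_{n-1}) / D_n` satisfies `D_n (q_n z - p_n) = ±1`, so
`|δ_n| = |q_n| / |D_n|`. The triangle inequality gives `|D_n| ≥ |z_{n+1}| |q_n| - |q_{n-1}|`, which
is (i), and `D_{n-1} = (z_n - a_n) D_n = D_n / z_{n+1}` turns (ii) into
`|z_{n+1}| |q_{n-1}| ≤ |q_n| + |D_n|`, again the triangle inequality. -/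

/-- `cfDenom zs q n` is `D_n`, with the index shift of `IsQPair`. -/
def cfDenom (zs q : ℕ → ℂ) (n : ℕ) : ℂ :=
  zs (n + 1) * q (n + 1) + q n

section

variable {Γ : Subring ℂ} {z : ℂ} {a zs p q : ℕ → ℂ}

namespace IsCFE

theorem sub_ne_zero (hcf : IsCFE Γ z a zs) (n : ℕ) : zs n - a n ≠ 0 :=
  norm_pos_iff.mp (hcf.2.2.1 n).1

theorem succ_mul_sub (hcf : IsCFE Γ z a zs) (n : ℕ) : zs (n + 1) * (zs n - a n) = 1 := by
  rw [hcf.2.2.2 n]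
  exact inv_mul_cancel₀ (hcf.sub_ne_zero n)

theorem norm_succ (hcf : IsCFE Γ z a zs) (n : ℕ) : ‖zs (n + 1)‖ = ‖zs n - a n‖⁻¹ := by
  rw [hcf.2.2.2 n, norm_inv]

end IsCFE

theorem IsQPair.err_add_two (hpq : IsQPair a p q) (z : ℂ) (n : ℕ) :
    q (n + 2) * z - p (n + 2) = a (n + 1) * (q (n + 1) * z - p (n + 1)) + (q n * z - p n) := by
  rw [hpq.2.2.2.2.2 n, hpq.2.2.1 n]
  ring

theorem err_succ (hcf : IsCFE Γ z a zs) (hpq : IsQPair a p q) (n : ℕ) :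
    q (n + 1) * z - p (n + 1) = -(zs n - a n) * (q n * z - p n) := by
  induction n with
  | zero =>
    obtain ⟨hp0, hp1, -, hq0, hq1, -⟩ := hpq
    rw [hp0, hp1, hq0, hq1, hcf.2.1]
    ring
  | succ n ih =>
    have hprev : q n * z - p n = -zs (n + 1) * (q (n + 1) * z - p (n + 1)) := by
      linear_combination zs (n + 1) * ih - (q n * z - p n) * hcf.succ_mul_sub n
    rw [hpq.err_add_two]
    linear_combination hprev

theorem sub_mul_cfDenom_succ (hcf : IsCFE Γ z a zs) (hpq : IsQPair a p q) (n : ℕ) :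
    (zs (n + 1) - a (n + 1)) * cfDenom zs q (n + 1) = cfDenom zs q n := by
  unfold cfDenom
  linear_combination q (n + 2) * hcf.succ_mul_sub (n + 1) + hpq.2.2.2.2.2 n

theorem cfDenom_mul_err (hcf : IsCFE Γ z a zs) (hpq : IsQPair a p q) (n : ℕ) :
    cfDenom zs q n * (q (n + 1) * z - p (n + 1)) = (-1) ^ n := by
  induction n with
  | zero =>
    obtain ⟨-, hp1, -, hq0, hq1, -⟩ := hpq
    simp only [cfDenom, hp1, hq0, hq1, ← hcf.2.1, pow_zero]
    linear_combination hcf.succ_mul_sub 0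
  | succ n ih =>
    rw [← sub_mul_cfDenom_succ hcf hpq] at ih
    rw [err_succ hcf hpq (n + 1), pow_succ]
    linear_combination -ih

theorem cfDenom_ne_zero (hcf : IsCFE Γ z a zs) (hpq : IsQPair a p q) (n : ℕ) :
    cfDenom zs q n ≠ 0 :=
  left_ne_zero_of_mul (by rw [cfDenom_mul_err hcf hpq]; exact pow_ne_zero _ (by norm_num))

theorem norm_relErr (hcf : IsCFE Γ z a zs) (hpq : IsQPair a p q) (n : ℕ) :
    ‖relErr z p q n‖ = ‖q (n + 1)‖ / ‖cfDenom zs q n‖ := by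
  have hD : ‖cfDenom zs q n‖ * ‖q (n + 1) * z - p (n + 1)‖ = 1 := by
    rw [← norm_mul, cfDenom_mul_err hcf hpq, norm_pow, norm_neg, norm_one, one_pow]
  rw [relErr, norm_mul, eq_div_iff (norm_ne_zero_iff.mpr (cfDenom_ne_zero hcf hpq n))]
  linear_combination ‖q (n + 1)‖ * hD

theorem norm_cfDenom (hcf : IsCFE Γ z a zs) (hpq : IsQPair a p q) (n : ℕ) :
    ‖cfDenom zs q n‖ = ‖cfDenom zs q (n + 1)‖ / ‖zs (n + 2)‖ := by
  rw [← sub_mul_cfDenom_succ hcf hpq, norm_mul, hcf.norm_succ, div_inv_eq_mul, mul_comm]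

theorem norm_mul_le_norm_cfDenom_add (n : ℕ) :
    ‖zs (n + 1)‖ * ‖q (n + 1)‖ ≤ ‖cfDenom zs q n‖ + ‖q n‖ := by
  rw [← norm_mul, show zs (n + 1) * q (n + 1) = cfDenom zs q n - q n by rw [cfDenom]; ring]
  exact norm_sub_le _ _

theorem norm_relErr_le_inv_sub_one (hcf : IsCFE Γ z a zs) (hpq : IsQPair a p q) (n : ℕ)
    (hq : ‖q n‖ ≤ ‖q (n + 1)‖) (hz : 1 < ‖zs (n + 1)‖) :
    ‖relErr z p q n‖ ≤ (‖zs (n + 1)‖ - 1)⁻¹ := by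
  have hD := cfDenom_ne_zero hcf hpq n
  rw [norm_relErr hcf hpq, div_le_iff₀ (norm_pos_iff.mpr hD), inv_mul_eq_div,
    le_div_iff₀ (by linarith)]
  linarith [norm_mul_le_norm_cfDenom_add (zs := zs) (q := q) n]

theorem norm_relErr_le_norm_relErr_succ_add_one (hcf : IsCFE Γ z a zs) (hpq : IsQPair a p q)
    (n : ℕ) (hq : ‖q (n + 1)‖ ≤ ‖q (n + 2)‖) :
    ‖relErr z p q n‖ ≤ ‖relErr z p q (n + 1)‖ + 1 := by
  have hD := norm_pos_iff.mpr (cfDenom_ne_zero hcf hpq (n + 1))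
  rw [norm_relErr hcf hpq, norm_relErr hcf hpq, norm_cfDenom hcf hpq, div_div_eq_mul_div,
    div_add_one hD.ne', div_le_div_iff_of_pos_right hD]
  linarith [norm_mul_le_norm_cfDenom_add (zs := zs) (q := q) (n + 1),
    mul_le_mul_of_nonneg_right hq (norm_nonneg (zs (n + 2)))]

end

/-- The paper's index `n ≥ 1` is `n + 1` below. -/
theorem stmt_2_general (Γ : Subring ℂ) (z : ℂ)
    (a zs p q : ℕ → ℂ) (hcf : IsCFE Γ z a zs) (hpq : IsQPair a p q) :
    ∀ n : ℕ, norm (q (n + 1)) ≤ norm (q (n + 2)) →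
      ((1 < norm (zs (n + 2)) →
          norm (relErr z p q (n + 1)) ≤ (norm (zs (n + 2)) - 1)⁻¹)
        ∧ norm (relErr z p q n) ≤ norm (relErr z p q (n + 1)) + 1) :=
  fun n hq => ⟨norm_relErr_le_inv_sub_one hcf hpq (n + 1) hq,
    norm_relErr_le_norm_relErr_succ_add_one hcf hpq n hq⟩

/-- Proposition 2.4: for any `n ≥ 1` with `|q_{n-1}| ≤ |q_n|`:
(i) if `|z_{n+1}| > 1` then `|δ_n| ≤ (|z_{n+1}| - 1)⁻¹`; (ii) `|δ_{n-1}| ≤ |δ_n| + 1`.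
(The paper's index `n ≥ 1` is `n + 1` below.) -/
theorem stmt_2 (Γ : Subring ℂ) (hdisc : DiscreteTopology Γ)
    (z : ℂ) (hz : z ∉ quotField Γ)
    (a zs p q : ℕ → ℂ) (hcf : IsCFE Γ z a zs) (hpq : IsQPair a p q) :
    ∀ n : ℕ, norm (q (n + 1)) ≤ norm (q (n + 2)) →
      ((1 < norm (zs (n + 2)) →
          norm (relErr z p q (n + 1)) ≤ (norm (zs (n + 2)) - 1)⁻¹)
        ∧ norm (relErr z p q n) ≤ norm (relErr z p q (n + 1)) + 1) :=
  stmt_2_general Γ z a zs p q hcf hpq
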